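/- arXiv:1710.09976 — 2 statements merged into one kernel-verified Lean document; each statement's English description precedes it below -/
import Mathlib

section
/- Let 0 < β < 1 and define d_k^{(β)} = (k+1)^{1−β} − k^{1−β} for integers k ≥ 0. For a positive integer N, let H_N be the N×N real symmetric Toeplitz matrix with entries (H_N)_{nn} = d_0^{(β)} for 1 ≤ n ≤ N and (H_N)_{nk} = (d_{|n−k|−1}^{(β)} + d_{|n−k|}^{(β)})/2 for n ≠ k. Then H_N is positive definite. -/
/-!
Write `α = 1 - β`. For `a ≥ 0` one has `a ^ α = C⁻¹ ∫₀^∞ s ^ (β - 2) (1 - e^(-a s)) ds`, so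
`d_k = C⁻¹ ∫₀^∞ s ^ (β - 2) r ^ k (1 - r) ds` with `r = e^(-s)`. Hence `H_N` is an integral,
against a positive weight, of the matrices `A_r` built from the geometric sequence
`r ^ k (1 - r)` in the same way as `H_N` is built from `d`. These are positive definite for
`-1 ≤ r < 1`: with `z_k = ∑_{n<k} r ^ (k-1-n) x_n` one has `z_{k+1} = r z_k + x_k` and
`2 xᵀ A_r x = (1 - r)² ∑_{k<N} (z_k + z_{k+1})² + (1 - r²) z_N²`,
where the first sum vanishes only if all `z_k`, hence all `x_k`, vanish.
-/

open Matrix MeasureTheory Real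

noncomputable section

section

open Finset

def avgKernel (e : ℕ → ℝ) (n k : ℕ) : ℝ :=
  if n = k then e 0 else (e (Nat.dist n k - 1) + e (Nat.dist n k)) / 2

lemma avgKernel_comm (e : ℕ → ℝ) (n k : ℕ) : avgKernel e n k = avgKernel e k n := by
  simp only [avgKernel, eq_comm, Nat.dist_comm]

def geomConv (r : ℝ) (x : ℕ → ℝ) (k : ℕ) : ℝ :=
  ∑ n ∈ range k, r ^ (k - 1 - n) * x n

@[simp]
lemma geomConv_zero (r : ℝ) (x : ℕ → ℝ) : geomConv r x 0 = 0 := by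
  simp [geomConv]

lemma geomConv_succ (r : ℝ) (x : ℕ → ℝ) (k : ℕ) :
    geomConv r x (k + 1) = r * geomConv r x k + x k := by
  rw [geomConv, sum_range_succ, geomConv, mul_sum, Nat.add_sub_cancel, Nat.sub_self, pow_zero,
    one_mul]
  congr 1
  refine sum_congr rfl fun n hn => ?_
  rw [← mul_assoc, ← pow_succ', Nat.sub_right_comm, Nat.sub_add_cancel]
  have := mem_range.1 hn
  omega

lemma avgKernel_geom_of_lt {r : ℝ} {n k : ℕ} (h : n < k) :
    avgKernel (fun j => r ^ j * (1 - r)) n k = (1 - r ^ 2) / 2 * r ^ (k - 1 - n) := by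
  have hd : Nat.dist n k = (k - 1 - n) + 1 := by
    rw [Nat.dist_eq_sub_of_le h.le]; omega
  rw [avgKernel, if_neg h.ne, hd, Nat.add_sub_cancel, pow_succ]
  ring

lemma sum_mul_avgKernel_geom (r : ℝ) (x : ℕ → ℝ) (k : ℕ) :
    ∑ n ∈ range k, x n * avgKernel (fun j => r ^ j * (1 - r)) n k
      = (1 - r ^ 2) / 2 * geomConv r x k := by
  rw [geomConv, mul_sum]
  refine sum_congr rfl fun n hn => ?_
  rw [avgKernel_geom_of_lt (mem_range.1 hn)]
  ring

lemma two_mul_quadForm_avgKernel_geom (r : ℝ) (x : ℕ → ℝ) (N : ℕ) :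
    2 * ∑ n ∈ range N, ∑ k ∈ range N, x n * avgKernel (fun j => r ^ j * (1 - r)) n k * x k
      = (1 - r) ^ 2 * ∑ k ∈ range N, (geomConv r x k + geomConv r x (k + 1)) ^ 2
        + (1 - r ^ 2) * geomConv r x N ^ 2 := by
  induction N with
  | zero => simp
  | succ N ih =>
    have hcol := sum_mul_avgKernel_geom r x N
    have hrow : ∑ k ∈ range N, x N * avgKernel (fun j => r ^ j * (1 - r)) N k * x k
        = x N * ((1 - r ^ 2) / 2 * geomConv r x N) := by
      rw [← hcol, mul_sum]
      exact sum_congr rfl fun k _ => by rw [avgKernel_comm]; ring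
    have hdiag : avgKernel (fun j => r ^ j * (1 - r)) N N = 1 - r := by simp [avgKernel]
    simp only [sum_range_succ, sum_add_distrib, ← sum_mul, hrow, hcol, hdiag]
    rw [geomConv_succ r x N]
    linear_combination ih

lemma eq_zero_of_sum_geomConv_add_sq_eq_zero {r : ℝ} {x : ℕ → ℝ} {N : ℕ}
    (h : ∑ k ∈ range N, (geomConv r x k + geomConv r x (k + 1)) ^ 2 = 0) :
    ∀ k < N, x k = 0 := by
  have hpair : ∀ k < N, geomConv r x k + geomConv r x (k + 1) = 0 := fun k hk =>
    pow_eq_zero_iff two_ne_zero |>.1 <|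
      (sum_eq_zero_iff_of_nonneg fun _ _ => sq_nonneg _).1 h k (mem_range.2 hk)
  have hz : ∀ k ≤ N, geomConv r x k = 0 := by
    intro k hk
    induction k with
    | zero => exact geomConv_zero r x
    | succ k ih => linarith [hpair k hk, ih (by omega)]
  intro k hk
  have := geomConv_succ r x k
  rw [hz k hk.le, hz (k + 1) hk] at this
  linarith

def avgToeplitz (e : ℕ → ℝ) (N : ℕ) : Matrix (Fin N) (Fin N) ℝ :=
  of fun n k => avgKernel e n k

lemma avgToeplitz_isHermitian (e : ℕ → ℝ) (N : ℕ) : (avgToeplitz e N).IsHermitian :=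
  ext fun n k => avgKernel_comm e k n

lemma avgToeplitz_smul (c : ℝ) (e : ℕ → ℝ) (N : ℕ) :
    avgToeplitz (c • e) N = c • avgToeplitz e N := by
  ext n k
  simp only [avgToeplitz, avgKernel, of_apply, Matrix.smul_apply, Pi.smul_apply, smul_eq_mul]
  split_ifs <;> ring

lemma dotProduct_mulVec_avgToeplitz (e : ℕ → ℝ) (x : ℕ → ℝ) (N : ℕ) :
    star (fun i : Fin N => x i) ⬝ᵥ (avgToeplitz e N *ᵥ fun i => x i)
      = ∑ n ∈ range N, ∑ k ∈ range N, x n * avgKernel e n k * x k := by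
  simp only [dotProduct, mulVec, avgToeplitz, of_apply, star_trivial, mul_sum, ← mul_assoc]
  rw [← Fin.sum_univ_eq_sum_range]
  refine sum_congr rfl fun n _ => ?_
  rw [← Fin.sum_univ_eq_sum_range]

theorem posDef_avgToeplitz_geom {r : ℝ} (hr₀ : -1 ≤ r) (hr₁ : r < 1) (N : ℕ) :
    (avgToeplitz (fun j => r ^ j * (1 - r)) N).PosDef := by
  refine posDef_iff_dotProduct_mulVec.2 ⟨avgToeplitz_isHermitian _ N, fun x hx => ?_⟩
  set y : ℕ → ℝ := fun n => if h : n < N then x ⟨n, h⟩ else 0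
  have hxy : x = fun i : Fin N => y i := funext fun i => by simp [y]
  have hS : 0 < ∑ k ∈ range N, (geomConv r y k + geomConv r y (k + 1)) ^ 2 := by
    refine (sum_nonneg fun _ _ => sq_nonneg _).lt_of_ne' fun h => hx ?_
    ext i
    rw [hxy]
    exact eq_zero_of_sum_geomConv_add_sq_eq_zero h i i.isLt
  have hform := two_mul_quadForm_avgKernel_geom r y N
  have hsum : 0 < (1 - r) ^ 2 * ∑ k ∈ range N, (geomConv r y k + geomConv r y (k + 1)) ^ 2 :=
    mul_pos (pow_pos (sub_pos.2 hr₁) 2) hS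
  have hlast : 0 ≤ (1 - r ^ 2) * geomConv r y N ^ 2 :=
    mul_nonneg (by nlinarith) (sq_nonneg _)
  rw [hxy, dotProduct_mulVec_avgToeplitz]
  linarith

end

theorem Matrix.posDef_of_integral {α ι : Type*} [MeasurableSpace α] [Fintype ι]
    {μ : Measure α} [NeZero μ] (K : α → Matrix ι ι ℝ) (hK : ∀ i j, Integrable (fun s => K s i j) μ)
    (hpos : ∀ᵐ s ∂μ, (K s).PosDef) :
    (Matrix.of fun i j => ∫ s, K s i j ∂μ).PosDef := by
  rw [posDef_iff_dotProduct_mulVec]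
  refine ⟨?_, fun x hx => ?_⟩
  · ext i j
    exact integral_congr_ae (hpos.mono fun s hs => hs.isHermitian.apply i j)
  have hint : ∀ i, Integrable (fun s => star x i * ∑ j, K s i j * x j) μ :=
    fun i => (integrable_finsetSum _ fun j _ => (hK i j).mul_const _).const_mul _
  have hform : star x ⬝ᵥ (of (fun i j => ∫ s, K s i j ∂μ) *ᵥ x)
      = ∫ s, star x ⬝ᵥ (K s *ᵥ x) ∂μ := by
    simp only [dotProduct, mulVec, of_apply]
    rw [integral_finsetSum _ fun i _ => hint i]
    refine Finset.sum_congr rfl fun i _ => ?_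
    rw [integral_const_mul, integral_finsetSum _ fun j _ => (hK i j).mul_const _]
    simp only [integral_mul_const]
  have hqpos : ∀ᵐ s ∂μ, 0 < star x ⬝ᵥ (K s *ᵥ x) :=
    hpos.mono fun s hs => hs.dotProduct_mulVec_pos hx
  rw [hform, integral_pos_iff_support_of_nonneg_ae (hqpos.mono fun s hs => hs.le)
    (integrable_finsetSum _ fun i _ => hint i)]
  refine pos_iff_ne_zero.2 fun h => ?_
  obtain ⟨s, hs, hs'⟩ := ((measure_eq_zero_iff_ae_notMem.1 h).and hqpos).exists
  exact hs hs'.ne'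

theorem posDef_avgToeplitz_of_integral {α : Type*} [MeasurableSpace α] {μ : Measure α}
    [NeZero μ] {e : ℕ → ℝ} (f : α → ℕ → ℝ) (hf : ∀ k, Integrable (fun s => f s k) μ)
    (he : ∀ k, e k = ∫ s, f s k ∂μ) (N : ℕ)
    (hpos : ∀ᵐ s ∂μ, (avgToeplitz (f s) N).PosDef) :
    (avgToeplitz e N).PosDef := by
  have hentry : ∀ n k, Integrable (fun s => avgKernel (f s) n k) μ := by
    intro n k
    unfold avgKernel
    split_ifs
    exacts [hf 0, ((hf _).add (hf _)).div_const 2]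
  have heq : avgToeplitz e N = of fun n k => ∫ s, avgToeplitz (f s) N n k ∂μ := by
    ext n k
    simp only [avgToeplitz, avgKernel, of_apply, he]
    split_ifs
    · rfl
    · rw [integral_div, integral_add (hf _) (hf _)]
  exact heq ▸ posDef_of_integral _ (fun n k => hentry n k) hpos

open Set

def rpowExpIntegrand (β a s : ℝ) : ℝ := s ^ (β - 2) * (1 - exp (-(a * s)))

variable {β : ℝ}

lemma rpowExpIntegrand_pos {a s : ℝ} (ha : 0 < a) (hs : 0 < s) : 0 < rpowExpIntegrand β a s :=
  mul_pos (rpow_pos_of_pos hs _) (sub_pos.2 (exp_lt_one_iff.2 (by simp; positivity)))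

lemma integrableOn_rpowExpIntegrand (hβ₀ : 0 < β) (hβ₁ : β < 1) {a : ℝ} (ha : 0 ≤ a) :
    IntegrableOn (rpowExpIntegrand β a) (Ioi 0) := by
  have hmeas : ∀ t ⊆ Ioi (0 : ℝ), MeasurableSet t →
      AEStronglyMeasurable (rpowExpIntegrand β a) (volume.restrict t) := fun t ht hmt =>
    (((continuousOn_id.rpow_const fun s hs => Or.inl (ne_of_gt hs)).mul
      (by fun_prop)).mono ht).aestronglyMeasurable hmt
  have hbound : ∀ s ∈ Ioi (0 : ℝ), ‖rpowExpIntegrand β a s‖ ≤ s ^ (β - 2) ∧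
      ‖rpowExpIntegrand β a s‖ ≤ a * s ^ (β - 1) := by
    intro s (hs : 0 < s)
    have hp := rpow_pos_of_pos hs (β - 2)
    have h₁ : exp (-(a * s)) ≤ 1 := exp_le_one_iff.2 (by simp; positivity)
    have h₂ := add_one_le_exp (-(a * s))
    have h₃ := exp_pos (-(a * s))
    rw [rpowExpIntegrand, norm_of_nonneg (by nlinarith), show β - 1 = β - 2 + 1 by ring,
      rpow_add_one hs.ne']
    constructor <;> nlinarith
  rw [← Ioc_union_Ioi_eq_Ioi zero_le_one]
  refine IntegrableOn.union ?_ ?_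
  · refine Integrable.mono'
      ((intervalIntegral.intervalIntegrable_rpow' (by linarith)).1.const_mul a)
      (hmeas _ Ioc_subset_Ioi_self measurableSet_Ioc)
      ((ae_restrict_iff' measurableSet_Ioc).2 (.of_forall fun s hs => (hbound s hs.1).2))
  · refine Integrable.mono' (integrableOn_Ioi_rpow_of_lt (by linarith) one_pos)
      (hmeas _ (Ioi_subset_Ioi zero_le_one) measurableSet_Ioi)
      ((ae_restrict_iff' measurableSet_Ioi).2 (.of_forall fun s (hs : 1 < s) =>
        (hbound s (zero_lt_one.trans hs)).1))

lemma integral_rpowExpIntegrand (hβ : β ≠ 1) {a : ℝ} (ha : 0 ≤ a) :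
    ∫ s in Ioi 0, rpowExpIntegrand β a s
      = a ^ (1 - β) * ∫ s in Ioi 0, rpowExpIntegrand β 1 s := by
  rcases ha.eq_or_lt with rfl | ha
  · simp [rpowExpIntegrand, zero_rpow (sub_ne_zero.2 hβ.symm)]
  have hscale : ∀ s ∈ Ioi (0 : ℝ),
      rpowExpIntegrand β a s = a ^ (2 - β) * rpowExpIntegrand β 1 (a * s) := by
    intro s (hs : 0 < s)
    rw [rpowExpIntegrand, rpowExpIntegrand, one_mul, mul_rpow ha.le hs.le, ← mul_assoc,
      ← mul_assoc, ← rpow_add ha]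
    norm_num
  rw [setIntegral_congr_fun measurableSet_Ioi hscale, integral_const_mul,
    integral_comp_mul_left_Ioi (rpowExpIntegrand β 1) 0 ha, mul_zero, smul_eq_mul, ← mul_assoc,
    ← rpow_neg_one a, ← rpow_add ha, show 2 - β + -1 = 1 - β by ring]

lemma integral_rpowExpIntegrand_one_pos (hβ₀ : 0 < β) (hβ₁ : β < 1) :
    0 < ∫ s in Ioi 0, rpowExpIntegrand β 1 s := by
  have hpos : ∀ s ∈ Ioi (0 : ℝ), 0 < rpowExpIntegrand β 1 s := fun s hs =>
    rpowExpIntegrand_pos one_pos hs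
  have hsupp : Ioi 0 ⊆ Function.support (rpowExpIntegrand β 1) := fun s hs => (hpos s hs).ne'
  rw [setIntegral_pos_iff_support_of_nonneg_ae
    ((ae_restrict_iff' measurableSet_Ioi).2 (.of_forall fun s hs => (hpos s hs).le))
    (integrableOn_rpowExpIntegrand hβ₀ hβ₁ zero_le_one),
    inter_eq_right.2 hsupp, volume_Ioi]
  exact ENNReal.zero_lt_top

lemma rpowExpIntegrand_succ_sub (β s : ℝ) (k : ℕ) :
    rpowExpIntegrand β (k + 1) s - rpowExpIntegrand β k s
      = s ^ (β - 2) * (exp (-s) ^ k * (1 - exp (-s))) := by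
  simp only [rpowExpIntegrand, ← exp_nat_mul]
  rw [show -((k + 1) * s) = k * -s + -s by ring, show -(k * s) = k * -s by ring, exp_add]
  ring

theorem posDef_avgToeplitz_rpow_sub (hβ₀ : 0 < β) (hβ₁ : β < 1) (N : ℕ) :
    (avgToeplitz (fun k => ((k : ℝ) + 1) ^ (1 - β) - (k : ℝ) ^ (1 - β)) N).PosDef := by
  set C := ∫ s in Ioi 0, rpowExpIntegrand β 1 s with hC
  have hCpos : 0 < C := integral_rpowExpIntegrand_one_pos hβ₀ hβ₁
  have hint {a : ℝ} (ha : 0 ≤ a) : IntegrableOn (rpowExpIntegrand β a) (Ioi 0) :=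
    integrableOn_rpowExpIntegrand hβ₀ hβ₁ ha
  have : NeZero (volume (Ioi (0 : ℝ))) := ⟨by simp⟩
  refine posDef_avgToeplitz_of_integral (μ := volume.restrict (Ioi 0))
    (fun s k => (rpowExpIntegrand β (k + 1) s - rpowExpIntegrand β k s) / C)
    (fun k => ?_) (fun k => ?_) N ?_
  · exact ((hint (by positivity)).sub (hint (by positivity))).div_const C
  · rw [integral_div, integral_sub (hint (by positivity)) (hint (by positivity)),
      integral_rpowExpIntegrand hβ₁.ne (a := k + 1) (by positivity),
      integral_rpowExpIntegrand hβ₁.ne (a := k) (by positivity), ← hC]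
    field_simp
  · refine (ae_restrict_iff' measurableSet_Ioi).2 (.of_forall fun s (hs : 0 < s) => ?_)
    have hscaled : (fun k : ℕ => (rpowExpIntegrand β (k + 1) s - rpowExpIntegrand β k s) / C)
        = (s ^ (β - 2) / C) • fun k => exp (-s) ^ k * (1 - exp (-s)) := by
      ext k
      rw [Pi.smul_apply, smul_eq_mul, rpowExpIntegrand_succ_sub]
      ring
    rw [hscaled, avgToeplitz_smul]
    exact (posDef_avgToeplitz_geom (by linarith [exp_pos (-s)])
      (exp_lt_one_iff.2 (neg_neg_of_pos hs)) N).smul (by positivity)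

end

theorem toeplitz_matrix_posDef_general
    (β : ℝ) (hβ0 : 0 < β) (hβ1 : β < 1)
    (d : ℕ → ℝ) (hd : ∀ k, d k = ((k : ℝ) + 1) ^ (1 - β) - (k : ℝ) ^ (1 - β))
    (N : ℕ)
    (H : Matrix (Fin N) (Fin N) ℝ)
    (hH : ∀ n k : Fin N, H n k =
      if n = k then d 0
      else (d (Nat.dist (n : ℕ) (k : ℕ) - 1) + d (Nat.dist (n : ℕ) (k : ℕ))) / 2) :
    H.PosDef := by
  have hH' : H = avgToeplitz d N := by
    ext n k
    simp only [hH, avgToeplitz, avgKernel, of_apply, Fin.val_inj]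
  rw [hH', funext hd]
  exact posDef_avgToeplitz_rpow_sub hβ0 hβ1 N

/-- The symmetric Toeplitz matrix `H_N` with diagonal entries `d_0^{(β)}` and
off-diagonal entries `(d_{|n-k|-1}^{(β)} + d_{|n-k|}^{(β)})/2` is positive
definite. -/
theorem toeplitz_matrix_posDef
    (β : ℝ) (hβ0 : 0 < β) (hβ1 : β < 1)
    (d : ℕ → ℝ) (hd : ∀ k, d k = ((k : ℝ) + 1) ^ (1 - β) - (k : ℝ) ^ (1 - β))
    (N : ℕ) (hN : 1 ≤ N)
    (H : Matrix (Fin N) (Fin N) ℝ)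
    (hH : ∀ n k : Fin N, H n k =
      if n = k then d 0
      else (d (Nat.dist (n : ℕ) (k : ℕ) - 1) + d (Nat.dist (n : ℕ) (k : ℕ))) / 2) :
    H.PosDef :=
  toeplitz_matrix_posDef_general β hβ0 hβ1 d hd N H hH
end

section
/- Let 0 < β < 1, τ > 0, h > 0, and M ≥ 1, N ≥ 1 integers, and define d_k^{(β)} = (k+1)^{1−β} − k^{1−β} for integers k ≥ 0. Let U^0, U^1, …, U^N be grid functions in V_h (i.e., U^n_0 = U^n_M = 0 for each n). Then Σ_{n=1}^{N} Σ_{k=1}^{n} d_{n−k}^{(β)} · (∇_t(δ_x² U^k), ∇_t U^n) ≤ 0. -/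
/-!
Summation by parts in space turns `(∇_t δ_x² U^k, ∇_t U^n)` into `-h Σ_i c^k_i c^n_i` with
`c^k = ∇_x ∇_t U^k`, so it suffices that `Σ_{n ≤ N} Σ_{k ≤ n} d_{n-k} b_k b_n ≥ 0` for every real
sequence `b`. The weights `d_j = (j+1)^{1-β} - j^{1-β}` are nonnegative, nonincreasing and convex.
Writing the form as `Σ_j d_j T_j`, with `T_j = Σ_n b_n b_{n-j}` the autocorrelations of `b`, two
summations by parts make it a nonnegative combination of `Σ_{j ≤ N} T_j = ((Σ b)² + Σ b²) / 2`
and of the iterated sums `Σ_{i < m} Σ_{j ≤ i} T_j`, which are nonnegative by the Fejér-type identity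
`2 Σ_{i < m} Σ_{j ≤ i} T_j = Σ_t (b_t + ⋯ + b_{t-m+1})² + m Σ b²`.
-/

open Finset

lemma hasDerivAt_rpow_add_one_sub_rpow (p : ℝ) {x : ℝ} (hx : 0 < x) :
    HasDerivAt (fun x : ℝ => (x + 1) ^ p - x ^ p) (p * ((x + 1) ^ (p - 1) - x ^ (p - 1))) x := by
  have h := (((hasDerivAt_id x).add_const 1).rpow_const (p := p) (Or.inl (by positivity))).sub
    (Real.hasDerivAt_rpow_const (p := p) (Or.inl hx.ne'))
  exact h.congr_deriv (by simp only [id, one_mul]; ring)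

lemma continuousOn_rpow_add_one_sub_rpow {p : ℝ} (hp : 0 ≤ p) :
    ContinuousOn (fun x : ℝ => (x + 1) ^ p - x ^ p) (Set.Ici 0) := fun x _ =>
  ((continuousAt_id.add continuousAt_const).rpow_const (Or.inr hp) |>.sub
    (Real.continuousAt_rpow_const x p (Or.inr hp))).continuousWithinAt

lemma antitoneOn_rpow_add_one_sub_rpow {p : ℝ} (hp0 : 0 ≤ p) (hp1 : p ≤ 1) :
    AntitoneOn (fun x : ℝ => (x + 1) ^ p - x ^ p) (Set.Ici 0) := by
  refine antitoneOn_of_hasDerivWithinAt_nonpos (convex_Ici 0)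
    (f' := fun x => p * ((x + 1) ^ (p - 1) - x ^ (p - 1)))
    (continuousOn_rpow_add_one_sub_rpow hp0) (fun x hx => ?_) fun x hx => ?_ <;>
    rw [interior_Ici] at hx
  · exact (hasDerivAt_rpow_add_one_sub_rpow p hx).hasDerivWithinAt
  · have : (x + 1) ^ (p - 1) ≤ x ^ (p - 1) :=
      Real.rpow_le_rpow_of_nonpos hx (by linarith) (by linarith)
    exact mul_nonpos_of_nonneg_of_nonpos hp0 (by linarith)

lemma convexOn_rpow_add_one_sub_rpow {p : ℝ} (hp0 : 0 ≤ p) (hp1 : p ≤ 1) :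
    ConvexOn ℝ (Set.Ici 0) (fun x : ℝ => (x + 1) ^ p - x ^ p) := by
  refine convexOn_of_hasDerivWithinAt2_nonneg (convex_Ici 0)
    (f' := fun x => p * ((x + 1) ^ (p - 1) - x ^ (p - 1)))
    (f'' := fun x => p * ((p - 1) * ((x + 1) ^ (p - 1 - 1) - x ^ (p - 1 - 1))))
    (continuousOn_rpow_add_one_sub_rpow hp0) (fun x hx => ?_) (fun x hx => ?_) fun x hx => ?_ <;>
    rw [interior_Ici] at hx
  · exact (hasDerivAt_rpow_add_one_sub_rpow p hx).hasDerivWithinAt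
  · exact ((hasDerivAt_rpow_add_one_sub_rpow (p - 1) hx).const_mul p).hasDerivWithinAt
  · have : (x + 1) ^ (p - 1 - 1) ≤ x ^ (p - 1 - 1) :=
      Real.rpow_le_rpow_of_nonpos hx (by linarith) (by linarith)
    exact mul_nonneg hp0 (mul_nonneg_of_nonpos_of_nonpos (by linarith) (by linarith))

lemma ConvexOn.sub_le_sub_of_add_two {f : ℝ → ℝ} {s : Set ℝ} (hf : ConvexOn ℝ s f) {x : ℝ}
    (hx : x ∈ s) (hx2 : x + 2 ∈ s) : f (x + 1) - f (x + 2) ≤ f x - f (x + 1) := by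
  have := hf.2 hx hx2 (by norm_num : (0 : ℝ) ≤ 1 / 2) (by norm_num : (0 : ℝ) ≤ 1 / 2) (by norm_num)
  simp only [smul_eq_mul] at this
  rw [show 1 / 2 * x + 1 / 2 * (x + 2) = x + 1 by ring] at this
  linarith

lemma sum_range_mul_eq_summation_by_parts_two (d T : ℕ → ℝ) (L : ℕ) :
    ∑ j ∈ range L, d j * T j =
      d L * ∑ j ∈ range L, T j
      + (d L - d (L + 1)) * ∑ i ∈ range L, ∑ j ∈ range (i + 1), T j
      + ∑ i ∈ range L, ((d i - d (i + 1)) - (d (i + 1) - d (i + 2))) *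
          ∑ k ∈ range (i + 1), ∑ j ∈ range (k + 1), T j := by
  induction L with
  | zero => simp
  | succ L ih =>
    rw [sum_range_succ, ih]
    simp only [sum_range_succ]
    ring

lemma sum_range_mul_nonneg_of_convex {d T : ℕ → ℝ} {L : ℕ} (hd_nonneg : ∀ j, 0 ≤ d j)
    (hd_anti : Antitone d) (hd_conv : ∀ j, d (j + 1) - d (j + 2) ≤ d j - d (j + 1))
    (hT : 0 ≤ ∑ j ∈ range L, T j)
    (hT₂ : ∀ m ≤ L, 0 ≤ ∑ i ∈ range m, ∑ j ∈ range (i + 1), T j) :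
    0 ≤ ∑ j ∈ range L, d j * T j := by
  rw [sum_range_mul_eq_summation_by_parts_two]
  have hΔ : 0 ≤ d L - d (L + 1) := sub_nonneg.2 (hd_anti (Nat.le_succ L))
  refine add_nonneg (add_nonneg (mul_nonneg (hd_nonneg L) hT) (mul_nonneg hΔ (hT₂ L le_rfl)))
    (sum_nonneg fun i hi => mul_nonneg (sub_nonneg.2 (hd_conv i)) (hT₂ _ ?_))
  simpa using hi

lemma sum_Icc_one_eq_sum_range {M : Type*} [AddCommMonoid M] {f : ℕ → M} (hf : f 0 = 0) (n : ℕ) :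
    ∑ k ∈ Icc 1 n, f k = ∑ k ∈ range (n + 1), f k := by
  rw [range_eq_Ico, sum_eq_sum_Ico_succ_bot (Nat.succ_pos n), hf, zero_add]
  rfl

def lowerToeplitzForm (d b : ℕ → ℝ) (N : ℕ) : ℝ :=
  ∑ n ∈ Icc 1 N, ∑ k ∈ Icc 1 n, d (n - k) * (b k * b n)

-- `n - j` truncates at `0`, so `b (n - j)` reads as `b` extended by zero to negative indices
-- provided `b 0 = 0`, which holds wherever `autocorr` is used.
def autocorr (b : ℕ → ℝ) (N j : ℕ) : ℝ :=
  ∑ n ∈ range (N + 1), b n * b (n - j)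

lemma lowerToeplitzForm_eq_sum_autocorr {b : ℕ → ℝ} (hb0 : b 0 = 0) (d : ℕ → ℝ) (N : ℕ) :
    lowerToeplitzForm d b N = ∑ j ∈ range (N + 1), d j * autocorr b N j := by
  have hlag : ∀ n ≤ N, ∑ k ∈ Icc 1 n, d (n - k) * (b k * b n)
      = ∑ j ∈ range (N + 1), d j * (b n * b (n - j)) := by
    intro n hn
    rw [sum_Icc_one_eq_sum_range (by simp [hb0]), ← sum_range_reflect]
    rw [eventually_constant_sum (u := fun j => d j * (b n * b (n - j))) (N := n + 1)
      (fun j hj => by simp [Nat.sub_eq_zero_of_le (by omega : n ≤ j), hb0]) (by omega)]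
    refine sum_congr rfl fun j hj => ?_
    rw [mem_range] at hj
    rw [show n + 1 - 1 - j = n - j by omega, show n - (n - j) = j by omega, mul_comm (b _)]
  unfold lowerToeplitzForm autocorr
  rw [sum_Icc_one_eq_sum_range (by simp),
    sum_congr rfl fun n hn => hlag n (by simpa [Nat.lt_succ_iff] using hn), sum_comm]
  simp only [mul_sum]

lemma two_mul_lowerToeplitzForm_one (b : ℕ → ℝ) (N : ℕ) :
    2 * lowerToeplitzForm (fun _ => 1) b N = (∑ k ∈ Icc 1 N, b k) ^ 2 + ∑ k ∈ Icc 1 N, b k ^ 2 := by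
  unfold lowerToeplitzForm
  induction N with
  | zero => simp
  | succ N ih =>
    simp only [one_mul, ← sum_mul] at ih ⊢
    simp only [sum_Icc_succ_top (show 1 ≤ N + 1 by omega)]
    linear_combination ih

lemma autocorr_eq_sum_mul_sub {b : ℕ → ℝ} {N : ℕ} (hb0 : b 0 = 0) (hbN : ∀ n, N < n → b n = 0)
    {j m R : ℕ} (hjm : j ≤ m) (hR : N + m ≤ R) :
    ∑ t ∈ range (R + 1), b (t - j) * b (t - m) = autocorr b N (m - j) := by
  rw [show R + 1 = j + (R + 1 - j) by omega, sum_range_add,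
    sum_eq_zero fun t ht => by simp [Nat.sub_eq_zero_of_le (mem_range.1 ht).le, hb0], zero_add,
    eventually_constant_sum (N := N + 1) (fun t ht => by simp [hbN t (by omega)]) (by omega)]
  refine sum_congr rfl fun t _ => ?_
  rw [show j + t - j = t by omega, show j + t - m = t - (m - j) by omega]

lemma two_mul_sum_sum_autocorr {b : ℕ → ℝ} {N : ℕ} (hb0 : b 0 = 0) (hbN : ∀ n, N < n → b n = 0)
    (m R : ℕ) (hR : N + m ≤ R) :
    2 * ∑ i ∈ range m, ∑ j ∈ range (i + 1), autocorr b N j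
      = ∑ t ∈ range (R + 1), (∑ i ∈ range m, b (t - i)) ^ 2 + m * autocorr b N 0 := by
  induction m with
  | zero => simp
  | succ m ih =>
    have hcross : ∑ t ∈ range (R + 1), (∑ i ∈ range m, b (t - i)) * b (t - m)
        = ∑ j ∈ range m, autocorr b N (j + 1) := by
      simp_rw [sum_mul]
      rw [sum_comm, ← sum_range_reflect]
      refine sum_congr rfl fun i hi => ?_
      rw [mem_range] at hi
      rw [autocorr_eq_sum_mul_sub hb0 hbN (by omega) (by omega)]
      congr 1
      omega
    have hsq : ∑ t ∈ range (R + 1), b (t - m) ^ 2 = autocorr b N 0 := by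
      have h := autocorr_eq_sum_mul_sub hb0 hbN (le_refl m) (R := R) (by omega)
      rw [Nat.sub_self] at h
      simp only [← h, sq]
    have hexpand : ∑ t ∈ range (R + 1), (∑ i ∈ range (m + 1), b (t - i)) ^ 2
        = ∑ t ∈ range (R + 1), (∑ i ∈ range m, b (t - i)) ^ 2
          + 2 * ∑ t ∈ range (R + 1), (∑ i ∈ range m, b (t - i)) * b (t - m)
          + ∑ t ∈ range (R + 1), b (t - m) ^ 2 := by
      rw [mul_sum, ← sum_add_distrib, ← sum_add_distrib]
      refine sum_congr rfl fun t _ => ?_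
      rw [sum_range_succ]
      ring
    rw [hexpand, hcross, hsq, sum_range_succ, sum_range_succ', mul_add, ih (by omega)]
    push_cast
    ring

lemma autocorr_zero_nonneg (b : ℕ → ℝ) (N : ℕ) : 0 ≤ autocorr b N 0 :=
  sum_nonneg fun n _ => by simpa using mul_self_nonneg (b n)

lemma lowerToeplitzForm_one_nonneg (b : ℕ → ℝ) (N : ℕ) :
    0 ≤ lowerToeplitzForm (fun _ => 1) b N := by
  have := two_mul_lowerToeplitzForm_one b N
  nlinarith [sq_nonneg (∑ k ∈ Icc 1 N, b k), sum_nonneg fun k (_ : k ∈ Icc 1 N) => sq_nonneg (b k)]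

theorem lowerToeplitzForm_nonneg {d : ℕ → ℝ} (hd_nonneg : ∀ j, 0 ≤ d j) (hd_anti : Antitone d)
    (hd_conv : ∀ j, d (j + 1) - d (j + 2) ≤ d j - d (j + 1)) (b : ℕ → ℝ) (N : ℕ) :
    0 ≤ lowerToeplitzForm d b N := by
  set b' : ℕ → ℝ := fun k => if k ∈ Icc 1 N then b k else 0 with hb'
  have hb0 : b' 0 = 0 := by simp [hb']
  have hbN : ∀ n, N < n → b' n = 0 := fun n hn => by simp [hb']; omega
  have hform : lowerToeplitzForm d b N = lowerToeplitzForm d b' N := by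
    refine sum_congr rfl fun n hn => sum_congr rfl fun k hk => ?_
    rw [mem_Icc] at hn hk
    simp [hb', hn, hk.1, hk.2.trans hn.2]
  rw [hform, lowerToeplitzForm_eq_sum_autocorr hb0]
  refine sum_range_mul_nonneg_of_convex hd_nonneg hd_anti hd_conv ?_ fun m _ => ?_
  · simpa [lowerToeplitzForm_eq_sum_autocorr hb0] using lowerToeplitzForm_one_nonneg b' N
  · have := two_mul_sum_sum_autocorr hb0 hbN m (N + m) le_rfl
    nlinarith [autocorr_zero_nonneg b' N, sum_nonneg fun t (_ : t ∈ range (N + m + 1)) =>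
      sq_nonneg (∑ i ∈ range m, b' (t - i))]

theorem lowerToeplitzForm_rpow_nonneg {p : ℝ} (hp0 : 0 ≤ p) (hp1 : p ≤ 1) (b : ℕ → ℝ) (N : ℕ) :
    0 ≤ lowerToeplitzForm (fun k => ((k : ℝ) + 1) ^ p - (k : ℝ) ^ p) b N := by
  refine lowerToeplitzForm_nonneg (fun j => ?_) (antitone_nat_of_succ_le fun j => ?_)
    (fun j => ?_) b N
  · exact sub_nonneg.2 (Real.rpow_le_rpow j.cast_nonneg (by linarith) hp0)
  · have := antitoneOn_rpow_add_one_sub_rpow hp0 hp1 (Set.mem_Ici.2 j.cast_nonneg)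
      (Set.mem_Ici.2 (j + 1).cast_nonneg) (by simp)
    push_cast at this ⊢
    exact this
  · have := (convexOn_rpow_add_one_sub_rpow hp0 hp1).sub_le_sub_of_add_two
      (Set.mem_Ici.2 j.cast_nonneg) (Set.mem_Ici.2 (by positivity : (0 : ℝ) ≤ j + 2))
    push_cast
    convert this using 3

lemma sum_secondDiff_mul_add_sum_diff_mul_diff (v w : ℕ → ℝ) (m : ℕ) :
    ∑ i ∈ Icc 1 m, (v (i - 1) - 2 * v i + v (i + 1)) * w i
      + ∑ i ∈ Icc 1 (m + 1), (v i - v (i - 1)) * (w i - w (i - 1))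
      = (v (m + 1) - v m) * w (m + 1) - (v 1 - v 0) * w 0 := by
  induction m with
  | zero => simp; ring
  | succ m ih =>
    rw [sum_Icc_succ_top (by omega), sum_Icc_succ_top (by omega)]
    simp only [Nat.add_sub_cancel]
    linear_combination ih

lemma sum_secondDiff_mul_eq_neg_sum_diff_mul_diff (v w : ℕ → ℝ) {M : ℕ} (hw0 : w 0 = 0)
    (hwM : w M = 0) :
    ∑ i ∈ Icc 1 (M - 1), (v (i - 1) - 2 * v i + v (i + 1)) * w i
      = -∑ i ∈ Icc 1 M, (v i - v (i - 1)) * (w i - w (i - 1)) := by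
  cases M with
  | zero => simp
  | succ m =>
    have h := sum_secondDiff_mul_add_sum_diff_mul_diff v w m
    rw [hw0, hwM] at h
    rw [Nat.add_sub_cancel]
    linarith

lemma mul_sum_timeDiff_secondDiff_mul_timeDiff (h τ : ℝ) (u u' w w' : ℕ → ℝ) {M : ℕ}
    (hw0 : w 0 = 0) (hw'0 : w' 0 = 0) (hwM : w M = 0) (hw'M : w' M = 0) :
    h * ∑ i ∈ Icc 1 (M - 1), (((u (i - 1) - 2 * u i + u (i + 1)) / h ^ 2
        - (u' (i - 1) - 2 * u' i + u' (i + 1)) / h ^ 2) / τ) * ((w i - w' i) / τ)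
      = -(h * (h ^ 2 * τ ^ 2)⁻¹) * ∑ i ∈ Icc 1 M,
          ((u i - u' i) - (u (i - 1) - u' (i - 1)))
            * ((w i - w' i) - (w (i - 1) - w' (i - 1))) := by
  have hgreen := sum_secondDiff_mul_eq_neg_sum_diff_mul_diff (fun i => u i - u' i)
    (fun i => w i - w' i) (M := M) (by simp [hw0, hw'0]) (by simp [hwM, hw'M])
  calc _ = h * (h ^ 2 * τ ^ 2)⁻¹ * ∑ i ∈ Icc 1 (M - 1),
        ((u (i - 1) - u' (i - 1)) - 2 * (u i - u' i) + (u (i + 1) - u' (i + 1)))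
          * (w i - w' i) := by
        rw [mul_sum, mul_sum]
        exact sum_congr rfl fun i _ => by ring
    _ = _ := by
        rw [hgreen]
        ring

theorem weighted_double_sum_nonpos_general
    (β τ h : ℝ) (hβ0 : 0 < β) (hβ1 : β < 1) (hh : 0 < h)
    (M N : ℕ)
    (d : ℕ → ℝ) (hd : ∀ k, d k = ((k : ℝ) + 1) ^ (1 - β) - (k : ℝ) ^ (1 - β))
    (U : ℕ → ℕ → ℝ) (hU : ∀ n ≤ N, U n 0 = 0 ∧ U n M = 0) :
    ∑ n ∈ Finset.Icc 1 N, ∑ k ∈ Finset.Icc 1 n, d (n - k) *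
        (h * ∑ i ∈ Finset.Icc 1 (M - 1),
          (((U k (i - 1) - 2 * U k i + U k (i + 1)) / h ^ 2
            - (U (k - 1) (i - 1) - 2 * U (k - 1) i + U (k - 1) (i + 1)) / h ^ 2) / τ)
          * ((U n i - U (n - 1) i) / τ))
      ≤ 0 := by
  set c : ℕ → ℕ → ℝ := fun k i => (U k i - U (k - 1) i) - (U k (i - 1) - U (k - 1) (i - 1))
  calc _ = ∑ n ∈ Icc 1 N, ∑ k ∈ Icc 1 n,
        d (n - k) * (-(h * (h ^ 2 * τ ^ 2)⁻¹) * ∑ i ∈ Icc 1 M, c k i * c n i) := by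
        refine sum_congr rfl fun n hn => sum_congr rfl fun k _ => ?_
        have hn' : n - 1 ≤ N := by rw [mem_Icc] at hn; omega
        rw [mul_sum_timeDiff_secondDiff_mul_timeDiff h τ _ _ _ _ (hU n (mem_Icc.1 hn).2).1
          (hU _ hn').1 (hU n (mem_Icc.1 hn).2).2 (hU _ hn').2]
    _ = -(h * (h ^ 2 * τ ^ 2)⁻¹) * ∑ i ∈ Icc 1 M, lowerToeplitzForm d (fun k => c k i) N := by
        simp only [lowerToeplitzForm, mul_sum]
        symm
        rw [sum_comm]
        refine sum_congr rfl fun n _ => ?_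
        rw [sum_comm]
        exact sum_congr rfl fun k _ => sum_congr rfl fun i _ => by ring
    _ ≤ 0 := by
        refine mul_nonpos_of_nonpos_of_nonneg (neg_nonpos.2 (by positivity))
          (sum_nonneg fun i _ => ?_)
        rw [funext hd]
        exact lowerToeplitzForm_rpow_nonneg (by linarith) (by linarith) _ N

/-- The key nonpositivity estimate (32): the double sum
`Σ_{n=1}^{N} Σ_{k=1}^{n} d_{n−k}^{(β)} (∇_t(δ_x² U^k), ∇_t U^n)` is
nonpositive for grid functions vanishing at the endpoints. -/
theorem weighted_double_sum_nonpos
    (β τ h : ℝ) (hβ0 : 0 < β) (hβ1 : β < 1) (hτ : 0 < τ) (hh : 0 < h)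
    (M N : ℕ) (hM : 1 ≤ M) (hN : 1 ≤ N)
    (d : ℕ → ℝ) (hd : ∀ k, d k = ((k : ℝ) + 1) ^ (1 - β) - (k : ℝ) ^ (1 - β))
    (U : ℕ → ℕ → ℝ) (hU : ∀ n ≤ N, U n 0 = 0 ∧ U n M = 0) :
    ∑ n ∈ Finset.Icc 1 N, ∑ k ∈ Finset.Icc 1 n, d (n - k) *
        (h * ∑ i ∈ Finset.Icc 1 (M - 1),
          (((U k (i - 1) - 2 * U k i + U k (i + 1)) / h ^ 2
            - (U (k - 1) (i - 1) - 2 * U (k - 1) i + U (k - 1) (i + 1)) / h ^ 2) / τ)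
          * ((U n i - U (n - 1) i) / τ))
      ≤ 0 :=
  weighted_double_sum_nonpos_general β τ h hβ0 hβ1 hh M N d hd U hU
end
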